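/- If f ∈ C¹[0,1], then for all n ≥ j ≥ 2 and x ∈ [0,1], |B_n(f;x) − B_{n,j}(f;x)| ≤ ((j−1)/n) ‖f'‖_∞. -/

import Mathlib

open Set Finset

/-- Bernstein basis polynomial `p_{n,k}(x) = C(n,k) x^k (1-x)^{n-k}`. -/
noncomputable def bp (n k : ℕ) (x : ℝ) : ℝ :=
  (n.choose k : ℝ) * x ^ k * (1 - x) ^ (n - k)

/-- AKR node `t_{n,k}^j = (k(k-1)⋯(k-j+1)/(n(n-1)⋯(n-j+1)))^{1/j}`. -/
noncomputable def akrNode (n j k : ℕ) : ℝ :=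
  ((∏ i ∈ Finset.range j, ((k : ℝ) - i)) / (∏ i ∈ Finset.range j, ((n : ℝ) - i))) ^ ((j : ℝ)⁻¹)

/-- Classical Bernstein operator. -/
noncomputable def bern (n : ℕ) (f : ℝ → ℝ) (x : ℝ) : ℝ :=
  ∑ k ∈ Finset.range (n + 1), f ((k : ℝ) / n) * bp n k x

/-- Aldaz–Kounchev–Render operator. -/
noncomputable def akr (n j : ℕ) (f : ℝ → ℝ) (x : ℝ) : ℝ :=
  ∑ k ∈ Finset.range (n + 1), f (akrNode n j k) * bp n k x

/-- Bivariate tensor-product Bernstein operator. -/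
noncomputable def bern2 (n m : ℕ) (f : ℝ → ℝ → ℝ) (x y : ℝ) : ℝ :=
  ∑ i ∈ Finset.range (n + 1), ∑ k ∈ Finset.range (m + 1),
    f ((i : ℝ) / n) ((k : ℝ) / m) * bp n i x * bp m k y

/-- Bivariate tensor-product AKR operator. -/
noncomputable def akr2 (n m j : ℕ) (f : ℝ → ℝ → ℝ) (x y : ℝ) : ℝ :=
  ∑ i ∈ Finset.range (n + 1), ∑ k ∈ Finset.range (m + 1),
    f (akrNode n j i) (akrNode m j k) * bp n i x * bp m k y

/-!
For `k ≥ j` the AKR node `t_{n,k}^j` is the geometric mean of the `j` ratios `(k - i)/(n - i)`,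
`i < j`, all of which lie in `[(k - j + 1)/n, k/n]`; for `k < j` it is `0`. Either way
`0 ≤ k/n - t_{n,k}^j ≤ (j - 1)/n`. By the mean value theorem `f` is `‖f'‖_∞`-Lipschitz on `[0,1]`,
so corresponding terms of the two operators differ by at most `((j - 1)/n) ‖f'‖_∞`, and the
Bernstein basis is a nonnegative partition of unity.
-/

lemma sum_bp_eq_one (n : ℕ) (x : ℝ) : ∑ k ∈ range (n + 1), bp n k x = 1 := by
  have h := add_pow x (1 - x) n
  rw [add_sub_cancel, one_pow] at h
  rw [h]
  refine sum_congr rfl fun k _ => ?_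
  simp only [bp]
  ring

lemma bp_nonneg (n k : ℕ) {x : ℝ} (hx : x ∈ Icc (0 : ℝ) 1) : 0 ≤ bp n k x :=
  mul_nonneg (mul_nonneg (Nat.cast_nonneg _) (pow_nonneg hx.1 _)) (pow_nonneg (sub_nonneg.2 hx.2) _)

lemma abs_sum_mul_bp_sub_sum_mul_bp_le {n : ℕ} {x : ℝ} (hx : x ∈ Icc (0 : ℝ) 1) {a b : ℕ → ℝ}
    {ε : ℝ} (hab : ∀ k ∈ range (n + 1), |a k - b k| ≤ ε) :
    |∑ k ∈ range (n + 1), a k * bp n k x - ∑ k ∈ range (n + 1), b k * bp n k x| ≤ ε := by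
  rw [← sum_sub_distrib]
  calc |∑ k ∈ range (n + 1), (a k * bp n k x - b k * bp n k x)|
      ≤ ∑ k ∈ range (n + 1), |a k - b k| * bp n k x := by
        refine (abs_sum_le_sum_abs _ _).trans_eq (sum_congr rfl fun k _ => ?_)
        rw [← sub_mul, abs_mul, abs_of_nonneg (bp_nonneg n k hx)]
    _ ≤ ∑ k ∈ range (n + 1), ε * bp n k x :=
        sum_le_sum fun k hk => mul_le_mul_of_nonneg_right (hab k hk) (bp_nonneg n k hx)
    _ = ε := by rw [← mul_sum, sum_bp_eq_one, mul_one]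

lemma prod_rpow_inv_card_mem_Icc {ι : Type*} {s : Finset ι} (hs : s.Nonempty) {c : ι → ℝ}
    {a b : ℝ} (ha : 0 ≤ a) (hc : ∀ i ∈ s, c i ∈ Icc a b) :
    (∏ i ∈ s, c i) ^ ((#s : ℝ)⁻¹) ∈ Icc a b := by
  have hs₀ : #s ≠ 0 := hs.card_ne_zero
  have hb : 0 ≤ b := by
    obtain ⟨i, hi⟩ := hs
    exact ha.trans ((hc i hi).1.trans (hc i hi).2)
  have hlow : a ^ #s ≤ ∏ i ∈ s, c i := by
    simpa only [prod_const] using prod_le_prod (fun _ _ => ha) fun i hi => (hc i hi).1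
  have hhigh : ∏ i ∈ s, c i ≤ b ^ #s := by
    simpa only [prod_const] using
      prod_le_prod (fun i hi => ha.trans (hc i hi).1) fun i hi => (hc i hi).2
  constructor
  · calc a = (a ^ #s) ^ ((#s : ℝ)⁻¹) := (Real.pow_rpow_inv_natCast ha hs₀).symm
      _ ≤ _ := Real.rpow_le_rpow (by positivity) hlow (by positivity)
  · calc _ ≤ (b ^ #s) ^ ((#s : ℝ)⁻¹) :=
          Real.rpow_le_rpow ((pow_nonneg ha _).trans hlow) hhigh (by positivity)
      _ = b := Real.pow_rpow_inv_natCast hb hs₀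

lemma sub_div_sub_mem_Icc {k n d i : ℝ} (hi : 0 ≤ i) (hid : i ≤ d) (hdk : d ≤ k) (hkn : k ≤ n)
    (hin : i < n) : (k - i) / (n - i) ∈ Icc ((k - d) / n) (k / n) := by
  have hni : 0 < n - i := sub_pos.2 hin
  refine ⟨div_le_div₀ (by linarith) (by linarith) hni (by linarith), ?_⟩
  rw [div_le_div_iff₀ hni (by linarith)]
  nlinarith

lemma akrNode_of_lt {n j k : ℕ} (hj : j ≠ 0) (hkj : k < j) : akrNode n j k = 0 := by
  have hzero : ∏ i ∈ range j, ((k : ℝ) - i) = 0 :=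
    prod_eq_zero (mem_range.2 hkj) (sub_self _)
  rw [akrNode, hzero, zero_div, Real.zero_rpow (inv_ne_zero (Nat.cast_ne_zero.2 hj))]

lemma akrNode_mem_Icc_of_le {n j k : ℕ} (hj : j ≠ 0) (hjk : j ≤ k) (hkn : k ≤ n) :
    akrNode n j k ∈ Icc ((k - ((j : ℝ) - 1)) / n) (k / n) := by
  have hjk' : (j : ℝ) ≤ k := by exact_mod_cast hjk
  have hkn' : (k : ℝ) ≤ n := by exact_mod_cast hkn
  have hratio : ∀ i ∈ range j, ((k : ℝ) - i) / (n - i) ∈ Icc ((k - ((j : ℝ) - 1)) / n) (k / n) := by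
    intro i hi
    have hij : (i : ℝ) + 1 ≤ j := by exact_mod_cast mem_range.1 hi
    exact sub_div_sub_mem_Icc (Nat.cast_nonneg i) (by linarith) (by linarith) hkn' (by linarith)
  rw [akrNode, ← prod_div_distrib]
  simpa only [card_range] using prod_rpow_inv_card_mem_Icc (nonempty_range_iff.2 hj)
    (div_nonneg (by linarith) (Nat.cast_nonneg n)) hratio

lemma akrNode_nonneg {n j k : ℕ} (hj : j ≠ 0) (hkn : k ≤ n) : 0 ≤ akrNode n j k := by
  rcases lt_or_ge k j with hkj | hjk
  · exact (akrNode_of_lt hj hkj).ge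
  · have hjk' : (j : ℝ) ≤ k := by exact_mod_cast hjk
    exact (div_nonneg (by linarith) (Nat.cast_nonneg n)).trans (akrNode_mem_Icc_of_le hj hjk hkn).1

lemma akrNode_mem_Icc {n j k : ℕ} (hj : j ≠ 0) (hkn : k ≤ n) :
    akrNode n j k ∈ Icc ((k : ℝ) / n - ((j : ℝ) - 1) / n) (k / n) := by
  rcases lt_or_ge k j with hkj | hjk
  · have hkj' : (k : ℝ) ≤ j - 1 := by
      have : (k : ℝ) + 1 ≤ j := by exact_mod_cast hkj
      linarith
    rw [akrNode_of_lt hj hkj, ← sub_div]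
    exact ⟨div_nonpos_of_nonpos_of_nonneg (by linarith) (Nat.cast_nonneg n), by positivity⟩
  · rw [← sub_div]
    exact akrNode_mem_Icc_of_le hj hjk hkn

lemma abs_bern_sub_akr_le_of_lipschitz {n j : ℕ} (hj : j ≠ 0) {f : ℝ → ℝ} {L : ℝ} (hL : 0 ≤ L)
    (hf : ∀ s ∈ Icc (0 : ℝ) 1, ∀ t ∈ Icc (0 : ℝ) 1, |f s - f t| ≤ L * |s - t|)
    {x : ℝ} (hx : x ∈ Icc (0 : ℝ) 1) :
    |bern n f x - akr n j f x| ≤ ((j : ℝ) - 1) / n * L := by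
  refine abs_sum_mul_bp_sub_sum_mul_bp_le hx fun k hk => ?_
  have hkn : k ≤ n := Nat.lt_succ_iff.1 (mem_range.1 hk)
  have hnode := akrNode_mem_Icc hj hkn
  have hgrid : (k : ℝ) / n ∈ Icc (0 : ℝ) 1 :=
    ⟨by positivity, div_le_one_of_le₀ (by exact_mod_cast hkn) (Nat.cast_nonneg n)⟩
  have hdist : |(k : ℝ) / n - akrNode n j k| ≤ ((j : ℝ) - 1) / n := by
    rw [abs_of_nonneg (sub_nonneg.2 hnode.2)]
    linarith [hnode.1]
  calc |f (k / n) - f (akrNode n j k)| ≤ L * |(k : ℝ) / n - akrNode n j k| :=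
        hf _ hgrid _ ⟨akrNode_nonneg hj hkn, hnode.2.trans hgrid.2⟩
    _ ≤ ((j : ℝ) - 1) / n * L := by
        rw [mul_comm]
        exact mul_le_mul_of_nonneg_right hdist hL

theorem stmt14_general (n j : ℕ) (hj : 2 ≤ j) (f f' : ℝ → ℝ)
    (hf' : ∀ x ∈ Icc (0:ℝ) 1, HasDerivWithinAt f (f' x) (Icc 0 1) x)
    (hc : ContinuousOn f' (Icc 0 1)) :
    ∀ x ∈ Icc (0:ℝ) 1,
      |bern n f x - akr n j f x| ≤
        (((j : ℝ) - 1) / n) * (⨆ t : Icc (0:ℝ) 1, |f' t|) := by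
  intro x hx
  set C := ⨆ t : Icc (0:ℝ) 1, |f' t|
  have hC : ∀ t ∈ Icc (0:ℝ) 1, ‖f' t‖ ≤ C := fun t ht =>
    le_ciSup_set (isCompact_Icc.bddAbove_image hc.abs) ht
  have hC₀ : 0 ≤ C := (norm_nonneg _).trans (hC 0 ⟨le_rfl, zero_le_one⟩)
  have hlip : ∀ s ∈ Icc (0:ℝ) 1, ∀ t ∈ Icc (0:ℝ) 1, |f s - f t| ≤ C * |s - t| := fun s hs t ht =>
    (convex_Icc 0 1).norm_image_sub_le_of_norm_hasDerivWithin_le hf' hC ht hs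
  exact abs_bern_sub_akr_le_of_lipschitz (by omega) hC₀ hlip hx

theorem stmt14 (n j : ℕ) (hj : 2 ≤ j) (hn : j ≤ n) (f f' : ℝ → ℝ)
    (hf' : ∀ x ∈ Icc (0:ℝ) 1, HasDerivWithinAt f (f' x) (Icc 0 1) x)
    (hc : ContinuousOn f' (Icc 0 1)) :
    ∀ x ∈ Icc (0:ℝ) 1,
      |bern n f x - akr n j f x| ≤
        (((j : ℝ) - 1) / n) * (⨆ t : Icc (0:ℝ) 1, |f' t|) :=
  stmt14_general n j hj f f' hf' hc
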